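/- Let L be a nonarchimedean field and A = L⟨x₁,...,x_d⟩. If f ∈ A does not lie in the ideal (x₁⋯x_d), then there exists N such that the coset f + p^N·O_L⟨x₁,...,x_d⟩ is disjoint from the ideal (x₁⋯x_d). (Here p is a pseudouniformizer of L.) -/

import Mathlib

/-!
STATEMENT 1: For `L` a complete nonarchimedean field with pseudouniformizer `p`, and
`A = L⟨x₁,…,x_d⟩` the Tate algebra, if `f ∈ A` does not lie in the ideal `(x₁⋯x_d)`,
then there is `N` such that the coset `f + p^N·O_L⟨x₁,…,x_d⟩` is disjoint from `(x₁⋯x_d)`.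

We model the Tate algebra as the set of multivariate power series whose coefficients tend
to `0`; `O_L⟨x₁,…,x_d⟩` is the subset of those with all coefficients of norm `≤ 1`.
-/

open Filter

noncomputable section

variable {L : Type*} [NontriviallyNormedField L] {d : ℕ}

/-- `f` belongs to the Tate algebra `L⟨x₁,…,x_d⟩`: its coefficients tend to `0`. -/
def IsTate (f : MvPowerSeries (Fin d) L) : Prop :=
  Tendsto (fun k => ‖MvPowerSeries.coeff k f‖) cofinite (nhds 0)

/-!
Since `x₁⋯x_d` is the monomial `x^e` with `e = (1,…,1)`, a Tate series lies in `(x₁⋯x_d)` exactly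
when its coefficients at the exponents `k` with `e ≰ k` vanish. So `f` has a nonzero such
coefficient `a`, and once `‖p‖^N < ‖a‖` no perturbation `p^N h` with `‖h‖ ≤ 1` can cancel it.
-/

open MvPowerSeries

theorem MvPowerSeries.prod_X_eq_monomial {σ R : Type*} [Fintype σ] [CommSemiring R] :
    ∏ i : σ, (X i : MvPowerSeries σ R) = monomial (∑ i : σ, Finsupp.single i 1) 1 := by
  simp_rw [X_def, prod_monomial, Finset.prod_const_one]

theorem MvPowerSeries.exists_eq_monomial_one_mul_of_coeff_eq_zero {σ R : Type*} [Semiring R]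
    {f : MvPowerSeries σ R} {e : σ →₀ ℕ} (hfe : ∀ k, ¬ e ≤ k → coeff k f = 0) :
    ∃ g, f = monomial e 1 * g ∧ ∀ m, coeff m g = coeff (m + e) f := by
  refine ⟨show MvPowerSeries σ R from fun m => coeff (m + e) f, ?_, fun m => rfl⟩
  ext k
  rw [coeff_monomial_mul]
  split_ifs with hek
  · rw [one_mul]
    exact congrArg (coeff · f) (tsub_add_cancel_of_le hek).symm
  · exact hfe k hek

theorem IsTate.exists_eq_monomial_one_mul {f : MvPowerSeries (Fin d) L} (hf : IsTate f)
    {e : Fin d →₀ ℕ} (hfe : ∀ k, ¬ e ≤ k → coeff k f = 0) :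
    ∃ g, IsTate g ∧ f = monomial e 1 * g := by
  obtain ⟨g, hfg, hg⟩ := exists_eq_monomial_one_mul_of_coeff_eq_zero hfe
  refine ⟨g, ?_, hfg⟩
  simp only [IsTate, hg]
  exact hf.comp (add_left_injective e).tendsto_cofinite

theorem add_mul_ne_zero_of_norm_lt {R : Type*} [SeminormedRing R] {a b c : R}
    (hca : ‖c‖ < ‖a‖) (hb : ‖b‖ ≤ 1) : a + c * b ≠ 0 := by
  intro h
  refine hca.not_ge ?_
  calc ‖a‖ = ‖c * b‖ := by rw [eq_neg_of_add_eq_zero_left h, norm_neg]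
    _ ≤ ‖c‖ * ‖b‖ := norm_mul_le c b
    _ ≤ ‖c‖ := mul_le_of_le_one_right (norm_nonneg c) hb

theorem stmt_1_general (p : L) (hp1 : ‖p‖ < 1)
    (f : MvPowerSeries (Fin d) L) (hf : IsTate f)
    (hnot : ¬ ∃ g : MvPowerSeries (Fin d) L, IsTate g ∧
        f = (∏ i : Fin d, MvPowerSeries.X i) * g) :
    ∃ N : ℕ, ∀ h : MvPowerSeries (Fin d) L, IsTate h →
      (∀ k, ‖MvPowerSeries.coeff k h‖ ≤ 1) →
      ¬ ∃ g : MvPowerSeries (Fin d) L, IsTate g ∧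
          f + (p ^ N) • h = (∏ i : Fin d, MvPowerSeries.X i) * g := by
  rw [prod_X_eq_monomial] at hnot ⊢
  obtain ⟨k, hk, hfk⟩ : ∃ k, ¬ (∑ i, Finsupp.single i 1) ≤ k ∧ coeff k f ≠ 0 := by
    by_contra! hvanish
    exact hnot (hf.exists_eq_monomial_one_mul hvanish)
  obtain ⟨N, hN⟩ := exists_pow_lt_of_lt_one (norm_pos_iff.mpr hfk) hp1
  refine ⟨N, fun h _ hh ⟨g, _, hfhg⟩ => ?_⟩
  have hcoeff := congrArg (coeff k) hfhg
  rw [map_add, coeff_smul, coeff_monomial_mul, if_neg hk] at hcoeff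
  exact add_mul_ne_zero_of_norm_lt (by rwa [norm_pow]) (hh k) hcoeff

theorem stmt_1 [CompleteSpace L] (p : L) (hp0 : 0 < ‖p‖) (hp1 : ‖p‖ < 1)
    (f : MvPowerSeries (Fin d) L) (hf : IsTate f)
    (hnot : ¬ ∃ g : MvPowerSeries (Fin d) L, IsTate g ∧
        f = (∏ i : Fin d, MvPowerSeries.X i) * g) :
    ∃ N : ℕ, ∀ h : MvPowerSeries (Fin d) L, IsTate h →
      (∀ k, ‖MvPowerSeries.coeff k h‖ ≤ 1) →
      ¬ ∃ g : MvPowerSeries (Fin d) L, IsTate g ∧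
          f + (p ^ N) • h = (∏ i : Fin d, MvPowerSeries.X i) * g :=
  stmt_1_general p hp1 f hf hnot

end
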